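/- arXiv:1506.03601 — 3 statements merged into one kernel-verified Lean document; each statement's English description precedes it below -/
import Mathlib

section
/- Let K be a field of characteristic zero, q ∈ K* not a root of unity, and b ∈ K* with b ∉ {q^i : i ∈ ℤ}, a ∈ K. Define a module V = ⨁_{i∈ℤ} K·v_i over the algebra D generated over R = K[τ,σ,σ^{-1}] by X, Y, Y₁ with relations YX = τ, XY = α(τ), Y₁X = qσ-1, XY₁ = α(qσ-1), Y₁(τ-1) = Y(σ-1), Xr = α(r)X, Yr = α^{-1}(r)Y, Y₁r = α^{-1}(r)Y₁ (where α(τ)=τ-1, α(σ)=σ/q), via: X·v_i = (q^{i+1}b-1)v_{i+1}, Y₁·v_i = v_{i-1}, Y·v_i = ((a+i-1)/(q^i b - 1))v_{i-1}, τ·v_i = (a+i)v_i, σ·v_i = q^i b·v_i. Then these formulas satisfy all defining relations of D, so V is a D-module. -/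
open Finsupp

private lemma end_ext' {K : Type*} [Field K] (f g : Module.End K (ℤ →₀ K))
    (h : ∀ i : ℤ, f (single i 1) = g (single i 1)) : f = g := by
  apply Module.Basis.ext (Finsupp.basisSingleOne (R := K) (ι := ℤ))
  intro i
  simpa using h i

/-- The formulas defining the module `V_q(ω,b,a) = ⨁_{i∈ℤ} K v_i` satisfy all the defining
relations of the algebra `D` (generated over `R = K[τ,σ,σ⁻¹]` by `X, Y, Y₁`). -/
theorem stmt13 (K : Type*) [Field K] [CharZero K] (q : K) (hq0 : q ≠ 0)
    (hq : ∀ n : ℕ, 0 < n → q ^ n ≠ 1)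
    (b : K) (hb0 : b ≠ 0) (hb : ∀ i : ℤ, b ≠ q ^ i) (a : K)
    (Xo Yo Y1 T S : Module.End K (ℤ →₀ K))
    (hX : ∀ i : ℤ, Xo (single i 1) = (q ^ (i + 1) * b - 1) • single (i + 1) (1 : K))
    (hY1 : ∀ i : ℤ, Y1 (single i 1) = single (i - 1) (1 : K))
    (hY : ∀ i : ℤ, Yo (single i 1) = ((a + i - 1) / (q ^ i * b - 1)) • single (i - 1) (1 : K))
    (hT : ∀ i : ℤ, T (single i 1) = (a + i) • single i (1 : K))
    (hS : ∀ i : ℤ, S (single i 1) = (q ^ i * b) • single i (1 : K)) :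
    Yo * Xo = T ∧ Xo * Yo = T - 1 ∧
    Y1 * Xo = q • S - 1 ∧ Xo * Y1 = S - 1 ∧
    Y1 * (T - 1) = Yo * (S - 1) ∧
    Xo * T = (T - 1) * Xo ∧ Xo * S = q⁻¹ • (S * Xo) ∧
    Yo * T = (T + 1) * Yo ∧ Yo * S = q • (S * Yo) ∧
    Y1 * T = (T + 1) * Y1 ∧ Y1 * S = q • (S * Y1) := by
  have hne : ∀ j : ℤ, q ^ j * b - 1 ≠ 0 := by
    intro j hc
    apply hb (-j)
    have h1 : b * q ^ j = 1 := by
      rw [mul_comm]; exact sub_eq_zero.mp hc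
    rw [zpow_neg]
    exact eq_inv_of_mul_eq_one_left h1
  have hsub : ∀ i : ℤ, i - 1 + 1 = i := fun i => by ring
  have hsub2 : ∀ i : ℤ, i + 1 - 1 = i := fun i => by ring
  have hne' : ∀ j : ℤ, q ^ j * q * b - 1 ≠ 0 := by
    intro j
    have := hne (j + 1)
    rwa [zpow_add_one₀ hq0] at this
  refine ⟨?_, ?_, ?_, ?_, ?_, ?_, ?_, ?_, ?_, ?_, ?_⟩ <;>
    apply end_ext' <;> intro i <;>
    simp only [Module.End.mul_apply, LinearMap.sub_apply, LinearMap.add_apply,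
      LinearMap.smul_apply, Module.End.one_apply, map_smul, map_sub, map_add,
      hX, hY, hY1, hT, hS, hsub, hsub2] <;>
    simp only [smul_smul, smul_sub, smul_add, Finsupp.smul_single, smul_eq_mul, mul_one,
      ← Finsupp.single_add, ← Finsupp.single_sub, hsub, hsub2] <;>
    congr 1 <;>
    push_cast <;>
    (try simp only [zpow_add_one₀ hq0, zpow_sub_one₀ hq0])
  all_goals try field_simp [hne i, hne' i, hq0]
  all_goals try ring
end

section
/- With D and V_q(ω,b,a) = ⨁_{i∈ℤ}K v_i as above (q not a root of unity, b ∉ {q^i}, a ∈ K, char K = 0), the D-module V_q(ω,b,a) is simple: every nonzero D-submodule equals V. -/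
open Finsupp

/-!
The operator `S` acts diagonally on the basis `v_i` with the pairwise distinct eigenvalues
`q^i b`, so every nonzero invariant subspace contains some basis vector `v_i`: subtracting
`q^i b • v` from `S v` kills the coordinate `i` and nothing else. From one `v_i`, the lowering
operator `Y₁` and the raising operator `X` (whose coefficients `q^{i+1} b - 1` never vanish because
`b ∉ q^ℤ`) produce all the other basis vectors.
-/

theorem zpow_injective_of_pow_ne_one {G₀ : Type*} [GroupWithZero G₀] {q : G₀} (hq0 : q ≠ 0)
    (hq : ∀ n : ℕ, 0 < n → q ^ n ≠ 1) : Function.Injective fun n : ℤ => q ^ n := by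
  have hfin : ¬IsOfFinOrder (Units.mk0 q hq0) := by
    rw [← Units.isOfFinOrder_val, isOfFinOrder_iff_pow_eq_one]
    rintro ⟨n, hn, hqn⟩
    exact hq n hn hqn
  intro m n hmn
  refine injective_zpow_iff_not_isOfFinOrder.2 hfin (Units.val_injective ?_)
  simpa using hmn

section DiagonalOperator

variable {K ι : Type*} [Field K] {f : Module.End K (ι →₀ K)} {μ : ι → K}

theorem apply_eq_mul_of_apply_single (hf : ∀ i, f (single i 1) = μ i • single i 1)
    (v : ι →₀ K) (j : ι) : f v j = μ j * v j := by
  suffices h : lapply j ∘ₗ f = μ j • lapply j from LinearMap.congr_fun h v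
  refine lhom_ext' fun i => LinearMap.ext_ring ?_
  simp only [LinearMap.coe_comp, Function.comp_apply, lsingle_apply, hf, LinearMap.smul_apply,
    lapply_apply, Finsupp.smul_apply, smul_eq_mul]
  rcases eq_or_ne i j with rfl | hij
  · rfl
  · rw [single_eq_of_ne' hij, mul_zero, mul_zero]

theorem exists_single_one_mem_of_ne_bot (hf : ∀ i, f (single i 1) = μ i • single i 1)
    (hμ : Function.Injective μ) {p : Submodule K (ι →₀ K)} (hp : ∀ v ∈ p, f v ∈ p)
    (hne : p ≠ ⊥) : ∃ i, single i 1 ∈ p := by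
  classical
  suffices h : ∀ s : Finset ι, ∀ v ∈ p, v ≠ 0 → v.support ⊆ s → ∃ i, single i 1 ∈ p by
    obtain ⟨v, hv, hv0⟩ := Submodule.exists_mem_ne_zero_of_ne_bot hne
    exact h _ v hv hv0 subset_rfl
  intro s
  induction s using Finset.induction_on with
  | empty =>
    intro v _ hv0 hsupp
    exact absurd (support_eq_empty.1 (Finset.subset_empty.1 hsupp)) hv0
  | insert i s _ ih =>
    intro v hv hv0 hsupp
    set w := f v - μ i • v
    have hw : ∀ j, w j = (μ j - μ i) * v j := fun j => by
      simp [w, apply_eq_mul_of_apply_single hf, sub_mul]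
    by_cases hw0 : w = 0
    · have hvi : v = single i (v i) := by
        refine support_subset_singleton.1 fun j hj => Finset.mem_singleton.2 ?_
        by_contra hji
        have h0 : (μ j - μ i) * v j = 0 := by rw [← hw, hw0, coe_zero, Pi.zero_apply]
        exact hji (hμ (sub_eq_zero.1 ((mul_eq_zero.1 h0).resolve_right (mem_support_iff.1 hj))))
      refine ⟨i, ?_⟩
      have hvi0 : v i ≠ 0 := fun h => hv0 (by rw [hvi, h, single_zero])
      have h : (v i)⁻¹ • single i (v i) = single i 1 := by
        rw [smul_single, smul_eq_mul, inv_mul_cancel₀ hvi0]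
      rw [← h, ← hvi]
      exact p.smul_mem _ hv
    · refine ih w (p.sub_mem (hp v hv) (p.smul_mem _ hv)) hw0 fun j hj => ?_
      rw [mem_support_iff, hw] at hj
      have hji : j ≠ i := by rintro rfl; simp at hj
      have hjv : j ∈ v.support := mem_support_iff.2 (right_ne_zero_of_mul hj)
      exact (Finset.mem_insert.1 (hsupp hjv)).resolve_left hji

end DiagonalOperator

theorem forall_single_one_mem_of_raise_lower {K : Type*} [Field K]
    {R L : Module.End K (ℤ →₀ K)} {c : ℤ → K} (hc : ∀ i, c i ≠ 0)
    (hR : ∀ i, R (single i 1) = c i • single (i + 1) 1)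
    (hL : ∀ i, L (single i 1) = single (i - 1) 1)
    {p : Submodule K (ℤ →₀ K)} (hRp : ∀ v ∈ p, R v ∈ p) (hLp : ∀ v ∈ p, L v ∈ p)
    {i : ℤ} (hi : single i 1 ∈ p) (j : ℤ) : single j 1 ∈ p := by
  induction j using Int.inductionOn' (b := i) with
  | zero => exact hi
  | succ k _ hk =>
    simpa [hR, smul_smul, hc] using p.smul_mem (c k)⁻¹ (hRp _ hk)
  | pred k _ hk => simpa [hL] using hLp _ hk

theorem Submodule.eq_top_of_forall_single_one_mem {K ι : Type*} [Field K]
    {p : Submodule K (ι →₀ K)} (h : ∀ i, single i 1 ∈ p) : p = ⊤ := by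
  rw [eq_top_iff, ← (Finsupp.basisSingleOne (R := K) (ι := ι)).span_eq, Submodule.span_le]
  rintro _ ⟨i, rfl⟩
  simpa using h i

theorem stmt14_general (K : Type*) [Field K] (q : K) (hq0 : q ≠ 0)
    (hq : ∀ n : ℕ, 0 < n → q ^ n ≠ 1)
    (b : K) (hb0 : b ≠ 0) (hb : ∀ i : ℤ, b ≠ q ^ i)
    (Xo Yo Y1 T S : Module.End K (ℤ →₀ K))
    (hX : ∀ i : ℤ, Xo (single i 1) = (q ^ (i + 1) * b - 1) • single (i + 1) (1 : K))
    (hY1 : ∀ i : ℤ, Y1 (single i 1) = single (i - 1) (1 : K))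
    (hS : ∀ i : ℤ, S (single i 1) = (q ^ i * b) • single i (1 : K)) :
    ∀ p : Submodule K (ℤ →₀ K),
      (∀ v ∈ p, Xo v ∈ p) → (∀ v ∈ p, Yo v ∈ p) → (∀ v ∈ p, Y1 v ∈ p) →
      (∀ v ∈ p, T v ∈ p) → (∀ v ∈ p, S v ∈ p) →
      p ≠ ⊥ → p = ⊤ := by
  intro p hXp _ hY1p _ hSp hp
  have hμ : Function.Injective fun i : ℤ => q ^ i * b :=
    (mul_left_injective₀ hb0).comp (zpow_injective_of_pow_ne_one hq0 hq)
  have hc : ∀ i : ℤ, q ^ (i + 1) * b - 1 ≠ 0 := fun i h =>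
    hb (-(i + 1)) (by rw [zpow_neg]; exact eq_inv_of_mul_eq_one_right (sub_eq_zero.1 h))
  obtain ⟨i, hi⟩ := exists_single_one_mem_of_ne_bot hS hμ hSp hp
  exact Submodule.eq_top_of_forall_single_one_mem
    (forall_single_one_mem_of_raise_lower hc hX hY1 hXp hY1p hi)

/-- The `D`-module `V_q(ω,b,a)` is simple: every nonzero `D`-submodule is the whole module. -/
theorem stmt14 (K : Type*) [Field K] [IsAlgClosed K] [CharZero K] (q : K) (hq0 : q ≠ 0)
    (hq : ∀ n : ℕ, 0 < n → q ^ n ≠ 1)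
    (b : K) (hb0 : b ≠ 0) (hb : ∀ i : ℤ, b ≠ q ^ i) (a : K)
    (Xo Yo Y1 T S : Module.End K (ℤ →₀ K))
    (hX : ∀ i : ℤ, Xo (single i 1) = (q ^ (i + 1) * b - 1) • single (i + 1) (1 : K))
    (hY1 : ∀ i : ℤ, Y1 (single i 1) = single (i - 1) (1 : K))
    (hY : ∀ i : ℤ, Yo (single i 1) = ((a + i - 1) / (q ^ i * b - 1)) • single (i - 1) (1 : K))
    (hT : ∀ i : ℤ, T (single i 1) = (a + i) • single i (1 : K))
    (hS : ∀ i : ℤ, S (single i 1) = (q ^ i * b) • single i (1 : K)) :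
    ∀ p : Submodule K (ℤ →₀ K),
      (∀ v ∈ p, Xo v ∈ p) → (∀ v ∈ p, Yo v ∈ p) → (∀ v ∈ p, Y1 v ∈ p) →
      (∀ v ∈ p, T v ∈ p) → (∀ v ∈ p, S v ∈ p) →
      p ≠ ⊥ → p = ⊤ :=
  stmt14_general K q hq0 hq b hb0 hb Xo Yo Y1 T S hX hY1 hS
end

section
/- Let K be an algebraically closed field and let V be an irreducible weight D-module such that X acts injectively on V and the support of V lies in a single finite orbit ω of α on Max(R). Then, fixing a nonzero weight vector v₀, the vectors {X^i v₀ : 0 ≤ i < |ω|} span V; in particular dim V = |ω| and every weight space is one-dimensional. -/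
/-!
`Z = X ^ r` commutes with every generator: with `T` and `S` because `r = 0` in `K` and
`q ^ r = 1`, and with `Y₀`, `Y₁` because `Yᵢ X` and `X Yᵢ` lie in `K[T, S]`. By irreducibility an
operator commuting with the generators is zero or bijective. If `L` is a subspace of the weight
space at `(a₀, b₀)` with `Z L = L`, the sum of the `Xⁿ L`, `n < r`, is a nonzero submodule,
hence `V`, and as the `r` weights of the orbit are distinct, `Xⁿ L` is the whole weight space at
`(a₀ + n, qⁿ b₀)`. For `L = K[Z, Z⁻¹] v₀` this puts the preimage of `v₀` under `Z - 1` (when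
`Z ≠ 1`) into `K[Z, Z⁻¹] v₀`, so `Z` satisfies a polynomial relation at `v₀` and, `K` being
algebraically closed, acts by a scalar. Then `L = K v₀` qualifies as well, so `Xⁿ v₀` spans
the weight space at `(a₀ + n, qⁿ b₀)`.
-/

open Polynomial

section PowerCommutation

variable {A : Type*} [Ring A]

theorem pow_mul_eq_sub_natCast_mul_pow {x t : A} (h : x * t = (t - 1) * x) (n : ℕ) :
    x ^ n * t = (t - n) * x ^ n := by
  induction n with
  | zero => simp
  | succ n ih =>
    rw [pow_succ', mul_assoc, ih, ← mul_assoc, mul_sub, h, ← (Nat.cast_commute n x).eq]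
    push_cast
    noncomm_ring

theorem pow_mul_eq_pow_smul_mul_pow {R : Type*} [CommSemiring R] [Algebra R A] {x s : A} {c : R}
    (h : x * s = c • (s * x)) (n : ℕ) : x ^ n * s = c ^ n • (s * x ^ n) := by
  induction n with
  | zero => simp
  | succ n ih =>
    rw [pow_succ', mul_assoc, ih, mul_smul_comm, ← mul_assoc, h, smul_mul_assoc, smul_smul,
      mul_assoc, ← pow_succ', ← pow_succ]

theorem commute_pow_of_natCast_eq_zero {x y t : A} (hyx : y * x = t) (hxy : x * y = t - 1)
    (hxt : x * t = (t - 1) * x) {r : ℕ} (hr : (r : A) = 0) : Commute y (x ^ r) := by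
  cases r with
  | zero => simp
  | succ m =>
    have hm : (m : A) = -1 := eq_neg_of_add_eq_zero_left (by exact_mod_cast hr)
    calc y * x ^ (m + 1) = y * x * x ^ m := by rw [pow_succ', mul_assoc]
      _ = x ^ m * (x * y) := by
        rw [hyx, hxy, mul_sub, pow_mul_eq_sub_natCast_mul_pow hxt, hm]; noncomm_ring
      _ = x ^ (m + 1) * y := by rw [pow_succ, mul_assoc]

theorem commute_pow_of_pow_eq_one {R : Type*} [Field R] [Algebra R A] {x y s : A} {c : R}
    (hyx : y * x = c • s - 1) (hxy : x * y = s - 1) (hxs : x * s = c⁻¹ • (s * x)) {r : ℕ}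
    (hr : c ^ r = 1) : Commute y (x ^ r) := by
  cases r with
  | zero => simp
  | succ m =>
    have hc : c⁻¹ ^ m = c := by
      rw [inv_pow, eq_inv_of_mul_eq_one_left (by rwa [← pow_succ] : c ^ m * c = 1), inv_inv]
    calc y * x ^ (m + 1) = y * x * x ^ m := by rw [pow_succ', mul_assoc]
      _ = x ^ m * (x * y) := by
        rw [hyx, hxy, mul_sub, pow_mul_eq_pow_smul_mul_pow hxs, hc, sub_mul, smul_mul_assoc,
          mul_one, one_mul]
      _ = x ^ (m + 1) * y := by rw [pow_succ, mul_assoc]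

end PowerCommutation

theorem commute_generators_pow {K V : Type*} [Field K] [AddCommGroup V] [Module K V] {q : K}
    {Xo Yo Y1 T S : Module.End K V} (hYoX : Yo * Xo = T) (hXYo : Xo * Yo = T - 1)
    (hY1X : Y1 * Xo = q • S - 1) (hXY1 : Xo * Y1 = S - 1) (hXT : Xo * T = (T - 1) * Xo)
    (hXS : Xo * S = q⁻¹ • (S * Xo)) {r : ℕ} (hrK : (r : K) = 0) (hqr : q ^ r = 1) :
    ∀ i, Commute (![Xo, Yo, Y1, T, S] i) (Xo ^ r) := by
  have hr : (r : Module.End K V) = 0 := by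
    rw [← map_natCast (algebraMap K (Module.End K V)), hrK, map_zero]
  intro i
  fin_cases i
  · exact Commute.self_pow Xo r
  · exact commute_pow_of_natCast_eq_zero hYoX hXYo hXT hr
  · exact commute_pow_of_pow_eq_one hY1X hXY1 hXS hqr
  · exact (by rw [pow_mul_eq_sub_natCast_mul_pow hXT, hr, sub_zero] : Xo ^ r * T = T * Xo ^ r).symm
  · exact (by rw [pow_mul_eq_pow_smul_mul_pow hXS, inv_pow, hqr, inv_one, one_smul] :
      Xo ^ r * S = S * Xo ^ r).symm

section Irreducible

variable {K V ι : Type*} [Field K] [AddCommGroup V] [Module K V]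

def IsIrreducibleFamily (f : ι → Module.End K V) : Prop :=
  ∀ p : Submodule K V, (∀ i, p ≤ p.comap (f i)) → p = ⊥ ∨ p = ⊤

namespace IsIrreducibleFamily

variable {f : ι → Module.End K V} {Z : Module.End K V}

theorem bijective_of_commute (hf : IsIrreducibleFamily f) (hZ : ∀ i, Commute (f i) Z)
    (hZ0 : Z ≠ 0) : Function.Bijective Z := by
  have hcomm : ∀ i v, f i (Z v) = Z (f i v) := fun i v => LinearMap.congr_fun (hZ i).eq v
  constructor
  · rw [← LinearMap.ker_eq_bot]
    refine (hf _ fun i v hv => ?_).resolve_right (mt LinearMap.ker_eq_top.mp hZ0)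
    rw [Submodule.mem_comap, LinearMap.mem_ker, ← hcomm, LinearMap.mem_ker.mp hv, map_zero]
  · rw [← LinearMap.range_eq_top]
    refine (hf _ fun i v hv => ?_).resolve_left (mt LinearMap.range_eq_bot.mp hZ0)
    obtain ⟨u, rfl⟩ := hv
    exact ⟨f i u, (hcomm i u).symm⟩

theorem exists_eq_algebraMap [IsAlgClosed K] (hf : IsIrreducibleFamily f)
    (hZ : ∀ i, Commute (f i) Z) {p : K[X]} (hp : p ≠ 0) {v : V} (hv : v ≠ 0)
    (hpv : aeval Z p v = 0) : ∃ μ : K, Z = algebraMap K (Module.End K V) μ := by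
  by_contra! hne
  have : Nontrivial V := nontrivial_of_ne v 0 hv
  have hunit : ∀ μ, IsUnit (algebraMap K (Module.End K V) μ - Z) := fun μ =>
    (Module.End.isUnit_iff _).mpr <| hf.bijective_of_commute
      (fun i => (Algebra.commute_algebraMap_right μ (f i)).sub_right (hZ i))
      (sub_ne_zero.mpr (hne μ).symm)
  have hpZ : IsUnit (aeval Z p) := by
    rcases le_or_gt p.degree 0 with hdeg | hdeg
    · rw [eq_C_of_degree_le_zero hdeg, aeval_C]
      refine (Ne.isUnit fun h0 => hp ?_).map _
      rw [eq_C_of_degree_le_zero hdeg, h0, map_zero]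
    · rw [← spectrum.zero_notMem_iff K, spectrum.map_polynomial_aeval_of_degree_pos Z p hdeg]
      rintro ⟨μ, hμ, -⟩
      exact hμ (hunit μ)
  exact hv (((Module.End.isUnit_iff _).mp hpZ).injective (by rw [hpv, map_zero]))

end IsIrreducibleFamily

end Irreducible

section Weights

variable {K V : Type*} [Field K] [AddCommGroup V] [Module K V]

theorem iSupIndep_eigenspace_inf_eigenspace (T S : Module.End K V) :
    iSupIndep fun w : K × K => T.eigenspace w.1 ⊓ S.eigenspace w.2 := by
  have hinj : Function.Injective fun w : K × K => fun i : Bool => cond i w.1 w.2 :=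
    fun w w' h => Prod.ext (congrFun h true) (congrFun h false)
  simpa [Function.comp_def, iInf_bool_eq] using
    (iSupIndep.iInf (fun i : Bool => (cond i T S).eigenspace)
      fun _ => Module.End.eigenspaces_iSupIndep _).comp hinj

theorem eigenspace_le_comap_of_commute {T A : Module.End K V} (h : Commute T A) (a : K) :
    T.eigenspace a ≤ (T.eigenspace a).comap A := fun v hv => by
  rw [Submodule.mem_comap, Module.End.mem_eigenspace_iff] at *
  rw [← Module.End.mul_apply, h.eq, Module.End.mul_apply, hv, map_smul]

theorem comap_eigenspace_le_of_commute {T A : Module.End K V} (h : Commute T A)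
    (hA : Function.Injective A) (a : K) : (T.eigenspace a).comap A ≤ T.eigenspace a :=
  fun v hv => by
  rw [Submodule.mem_comap, Module.End.mem_eigenspace_iff] at *
  apply hA
  rw [← Module.End.mul_apply, ← h.eq, Module.End.mul_apply, hv, map_smul]

theorem eigenspace_inf_le_comap {T S A : Module.End K V} (hT : Commute T A) (hS : Commute S A)
    (a b : K) : T.eigenspace a ⊓ S.eigenspace b ≤ (T.eigenspace a ⊓ S.eigenspace b).comap A := by
  rw [Submodule.comap_inf]
  exact inf_le_inf (eigenspace_le_comap_of_commute hT a) (eigenspace_le_comap_of_commute hS b)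

theorem comap_eigenspace_inf_le {T S A : Module.End K V} (hT : Commute T A) (hS : Commute S A)
    (hA : Function.Injective A) (a b : K) :
    (T.eigenspace a ⊓ S.eigenspace b).comap A ≤ T.eigenspace a ⊓ S.eigenspace b := by
  rw [Submodule.comap_inf]
  exact inf_le_inf (comap_eigenspace_le_of_commute hT hA a) (comap_eigenspace_le_of_commute hS hA b)

theorem pow_apply_mem_eigenspace {Xo T : Module.End K V} (h : Xo * T = (T - 1) * Xo) {a : K}
    {v : V} (hv : v ∈ T.eigenspace a) (n : ℕ) : (Xo ^ n) v ∈ T.eigenspace (a + n) := by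
  rw [Module.End.mem_eigenspace_iff] at *
  have := LinearMap.congr_fun (pow_mul_eq_sub_natCast_mul_pow h n) v
  simp only [Module.End.mul_apply, hv, map_smul, LinearMap.sub_apply, Module.End.natCast_apply]
    at this
  rw [add_smul, this, Nat.cast_smul_eq_nsmul, sub_add_cancel]

theorem pow_apply_mem_eigenspace_of_mul_eq_smul {Xo S : Module.End K V} {c : K} (hc : c ≠ 0)
    (h : Xo * S = c⁻¹ • (S * Xo)) {b : K} {v : V} (hv : v ∈ S.eigenspace b) (n : ℕ) :
    (Xo ^ n) v ∈ S.eigenspace (c ^ n * b) := by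
  rw [Module.End.mem_eigenspace_iff] at *
  have := LinearMap.congr_fun (pow_mul_eq_pow_smul_mul_pow h n) v
  simp only [Module.End.mul_apply, hv, map_smul, LinearMap.smul_apply] at this
  rw [mul_smul, this, smul_smul, ← mul_pow, mul_inv_cancel₀ hc, one_pow, one_smul]

theorem orbit_injective {q a b : K} (hq : q ≠ 0) (hb : b ≠ 0) {r : ℕ}
    (hmin : ∀ i : ℕ, 0 < i → i < r → ¬((i : K) = 0 ∧ q ^ i = 1)) :
    Function.Injective fun n : Fin r => (a + (n : ℕ), q ^ (n : ℕ) * b) := by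
  intro i j h
  simp only [Prod.mk.injEq, add_right_inj] at h
  obtain ⟨h1, h2⟩ := h
  replace h2 := mul_right_cancel₀ hb h2
  by_contra hne
  wlog hij : (i : ℕ) < j generalizing i j
  · exact this h1.symm h2.symm (Ne.symm hne)
      (lt_of_le_of_ne (not_lt.mp hij) (Fin.val_ne_of_ne (Ne.symm hne)))
  refine hmin (j - i) (by omega) (by omega) ⟨by rw [Nat.cast_sub hij.le, h1, sub_self], ?_⟩
  refine mul_left_cancel₀ (pow_ne_zero i hq) ?_
  rw [← pow_add, Nat.add_sub_cancel' hij.le, mul_one, h2]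

theorem iSupIndep_orbit_eigenspace_inf (T S : Module.End K V) {q a b : K} (hq : q ≠ 0)
    (hb : b ≠ 0) {r : ℕ} (hmin : ∀ i : ℕ, 0 < i → i < r → ¬((i : K) = 0 ∧ q ^ i = 1)) :
    iSupIndep fun n : Fin r => T.eigenspace (a + (n : ℕ)) ⊓ S.eigenspace (q ^ (n : ℕ) * b) :=
  (iSupIndep_eigenspace_inf_eigenspace T S).comp
    (f := fun n : Fin r => (a + (n : ℕ), q ^ (n : ℕ) * b)) (orbit_injective hq hb hmin)

end Weights

section LaurentSpan

variable {K V : Type*} [Field K] [AddCommGroup V] [Module K V] {Z : Module.End K V} {v w : V}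

/-- For invertible `Z` this is the `K[Z, Z⁻¹]`-submodule generated by `v`. -/
def laurentSpan (Z : Module.End K V) (v : V) : Submodule K V where
  carrier := {w | ∃ (N : ℕ) (p : K[X]), (Z ^ N) w = aeval Z p v}
  add_mem' := by
    rintro w w' ⟨N, p, hp⟩ ⟨N', p', hp'⟩
    refine ⟨N' + N, X ^ N' * p + X ^ N * p', ?_⟩
    have e : (Z ^ (N' + N)) w' = (Z ^ N) (aeval Z p' v) := by
      rw [add_comm, pow_add, Module.End.mul_apply, hp']
    rw [map_add, e, pow_add, Module.End.mul_apply, hp]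
    simp only [map_add, map_mul, aeval_X_pow, LinearMap.add_apply, Module.End.mul_apply]
  zero_mem' := ⟨0, 0, by simp⟩
  smul_mem' := by
    rintro c w ⟨N, p, hp⟩
    exact ⟨N, C c * p, by simp [hp]⟩

theorem self_mem_laurentSpan : v ∈ laurentSpan Z v := ⟨0, 1, by simp⟩

theorem apply_mem_laurentSpan (hw : w ∈ laurentSpan Z v) : Z w ∈ laurentSpan Z v := by
  obtain ⟨N, p, hp⟩ := hw
  refine ⟨N, X * p, ?_⟩
  rw [← Module.End.mul_apply, ← pow_succ, pow_succ', Module.End.mul_apply, hp, map_mul, aeval_X,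
    Module.End.mul_apply]

theorem mem_laurentSpan_of_apply_mem (hw : Z w ∈ laurentSpan Z v) : w ∈ laurentSpan Z v := by
  obtain ⟨N, p, hp⟩ := hw
  exact ⟨N + 1, p, by rw [pow_succ, Module.End.mul_apply, hp]⟩

theorem laurentSpan_le {E : Submodule K V} (hv : v ∈ E) (hE : E ≤ E.comap Z)
    (hE' : E.comap Z ≤ E) : laurentSpan Z v ≤ E := by
  rintro w ⟨N, p, hp⟩
  have hZN : ∀ (N : ℕ) (u : V), (Z ^ N) u ∈ E → u ∈ E := by
    intro N
    induction N with
    | zero => simp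
    | succ N ih => exact fun u hu => hE' (ih _ (by rwa [pow_succ, Module.End.mul_apply] at hu))
  exact hZN N w (hp ▸ aeval_apply_smul_mem_of_le_comap hv p Z hE)

theorem exists_aeval_apply_eq_zero_of_mem_laurentSpan {u : V} (hu : u ∈ laurentSpan Z v)
    (huv : Z u - u = v) : ∃ p : K[X], p ≠ 0 ∧ aeval Z p v = 0 := by
  obtain ⟨N, p, hp⟩ := hu
  refine ⟨X ^ N - (X - 1) * p, fun h0 => by simpa using congrArg (eval 1) h0, ?_⟩
  rw [map_sub, map_mul, LinearMap.sub_apply, Module.End.mul_apply, ← hp, ← huv]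
  simp only [map_sub, aeval_X_pow, aeval_X, map_one, LinearMap.sub_apply, Module.End.one_apply]
  rw [← Module.End.mul_apply Z, ← pow_succ', pow_succ, Module.End.mul_apply]
  abel

theorem map_laurentSpan_eq (hZ : Function.Surjective Z) :
    (laurentSpan Z v).map Z = laurentSpan Z v := by
  refine le_antisymm (Submodule.map_le_iff_le_comap.mpr fun w hw => apply_mem_laurentSpan hw)
    fun w hw => ?_
  obtain ⟨u, rfl⟩ := hZ w
  exact ⟨u, mem_laurentSpan_of_apply_mem hw, rfl⟩

theorem laurentSpan_ne_bot (hv : v ≠ 0) : laurentSpan Z v ≠ ⊥ :=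
  (Submodule.ne_bot_iff _).mpr ⟨v, self_mem_laurentSpan, hv⟩

theorem IsIrreducibleFamily.exists_eq_algebraMap_of_laurentSpan_eq {ι : Type*} [IsAlgClosed K]
    {f : ι → Module.End K V} (hf : IsIrreducibleFamily f) (hZ : ∀ i, Commute (f i) Z) {i j : ι}
    {a b : K} (hv : v ≠ 0) (hE : laurentSpan Z v = (f i).eigenspace a ⊓ (f j).eigenspace b) :
    ∃ μ : K, Z = algebraMap K (Module.End K V) μ := by
  by_cases h1 : Z = 1
  · exact ⟨1, by rw [h1, map_one]⟩
  have hZ1 : ∀ k, Commute (f k) (Z - 1) := fun k => (hZ k).sub_right (Commute.one_right _)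
  obtain ⟨hinj, hsurj⟩ := hf.bijective_of_commute hZ1 (sub_ne_zero.mpr h1)
  obtain ⟨u, hu⟩ := hsurj v
  have hvE : v ∈ (f i).eigenspace a ⊓ (f j).eigenspace b := hE ▸ self_mem_laurentSpan
  have huE : u ∈ laurentSpan Z v := hE ▸ comap_eigenspace_inf_le (hZ1 i) (hZ1 j) hinj a b
    (by rw [Submodule.mem_comap, hu]; exact hvE)
  obtain ⟨p, hp, hpv⟩ := exists_aeval_apply_eq_zero_of_mem_laurentSpan huE
    (by rw [← hu, LinearMap.sub_apply, Module.End.one_apply])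
  exact hf.exists_eq_algebraMap hZ hp hv hpv

end LaurentSpan

section Spanning

variable {K V : Type*} [Field K] [AddCommGroup V] [Module K V]

theorem map_pow_le_eigenspace_inf {Xo T S : Module.End K V} {q : K} (hq : q ≠ 0)
    (hXT : Xo * T = (T - 1) * Xo) (hXS : Xo * S = q⁻¹ • (S * Xo)) {a b : K} {L : Submodule K V}
    (hL : L ≤ T.eigenspace a ⊓ S.eigenspace b) (n : ℕ) :
    L.map (Xo ^ n) ≤ T.eigenspace (a + n) ⊓ S.eigenspace (q ^ n * b) := by
  rintro _ ⟨v, hv, rfl⟩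
  exact ⟨pow_apply_mem_eigenspace hXT (hL hv).1 n,
    pow_apply_mem_eigenspace_of_mul_eq_smul hq hXS (hL hv).2 n⟩

theorem iSup_le_comap_of_le_eigenspace {ι : Type*} {T : Module.End K V} {U : ι → Submodule K V}
    {c : ι → K} (hU : ∀ i, U i ≤ T.eigenspace (c i)) : ⨆ i, U i ≤ (⨆ i, U i).comap T := by
  rw [← Submodule.map_le_iff_le_comap, Submodule.map_iSup]
  refine iSup_mono fun i => Submodule.map_le_iff_le_comap.mpr fun v hv => ?_
  rw [Submodule.mem_comap, Module.End.mem_eigenspace_iff.mp (hU i hv)]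
  exact (U i).smul_mem _ hv

theorem le_comap_of_mul_eq_of_le_map {Xo Y A : Module.End K V} {M : Submodule K V}
    (hYX : Y * Xo = A) (hMX : M ≤ M.map Xo) (hA : M ≤ M.comap A) : M ≤ M.comap Y := by
  intro v hv
  obtain ⟨u, hu, rfl⟩ := hMX hv
  rw [Submodule.mem_comap, ← Module.End.mul_apply, hYX]
  exact hA hu

/-- `M = ⨆ n < r, Xⁿ L` is stable under `X` because `X ^ r L = L`, under `T` and `S` because it
is a sum of weight spaces, and under `Y₀`, `Y₁` because `M = X M` and `Yᵢ X ∈ K[T, S]`. -/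
theorem IsIrreducibleFamily.iSup_map_pow_eq_top {Xo Yo Y1 T S : Module.End K V} {q a b : K}
    (hf : IsIrreducibleFamily ![Xo, Yo, Y1, T, S]) (hYoX : Yo * Xo = T)
    (hY1X : Y1 * Xo = q • S - 1) (hXT : Xo * T = (T - 1) * Xo) (hXS : Xo * S = q⁻¹ • (S * Xo))
    (hq : q ≠ 0) {r : ℕ} (hr : 0 < r) {L : Submodule K V}
    (hL : L ≤ T.eigenspace a ⊓ S.eigenspace b) (hLr : L.map (Xo ^ r) = L) (hL0 : L ≠ ⊥) :
    ⨆ n : Fin r, L.map (Xo ^ (n : ℕ)) = ⊤ := by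
  set M := ⨆ n : Fin r, L.map (Xo ^ (n : ℕ))
  have hmap_succ : ∀ n : ℕ, (L.map (Xo ^ n)).map Xo = L.map (Xo ^ (n + 1)) := fun n => by
    rw [← Submodule.map_comp, ← Module.End.mul_eq_comp, pow_succ']
  have hUM (n : Fin r) : L.map (Xo ^ (n : ℕ)) ≤ M :=
    le_iSup (fun n : Fin r => L.map (Xo ^ (n : ℕ))) n
  have hmap_zero : L.map (Xo ^ 0) = L := by
    rw [pow_zero, Module.End.one_eq_id, Submodule.map_id]
  have hLM : L ≤ M := hmap_zero ▸ hUM ⟨0, hr⟩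
  have hX : M ≤ M.comap Xo := by
    rw [← Submodule.map_le_iff_le_comap, Submodule.map_iSup]
    refine iSup_le fun n => ?_
    rw [hmap_succ]
    rcases (show (n : ℕ) + 1 ≤ r from n.2).lt_or_eq with h | h
    · exact hUM ⟨n + 1, h⟩
    · rw [h, hLr]; exact hLM
  have hMX : M ≤ M.map Xo := by
    refine iSup_le fun ⟨n, hn⟩ => ?_
    cases n with
    | zero =>
      obtain ⟨m, rfl⟩ := Nat.exists_eq_add_one_of_ne_zero hr.ne'
      rw [hmap_zero, ← hLr, ← hmap_succ]
      exact Submodule.map_mono (hUM ⟨m, by omega⟩)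
    | succ n =>
      rw [← hmap_succ]
      exact Submodule.map_mono (hUM ⟨n, by omega⟩)
  have hwt := map_pow_le_eigenspace_inf hq hXT hXS hL
  have hT : M ≤ M.comap T := iSup_le_comap_of_le_eigenspace fun n => (hwt n).trans inf_le_left
  have hS : M ≤ M.comap S := iSup_le_comap_of_le_eigenspace fun n => (hwt n).trans inf_le_right
  have hqS : M ≤ M.comap (q • S - 1) := fun v hv =>
    M.sub_mem (M.smul_mem q (hS hv)) (by simpa using hv)
  refine (hf M fun i => ?_).resolve_left (ne_bot_of_le_ne_bot hL0 hLM)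
  fin_cases i
  exacts [hX, le_comap_of_mul_eq_of_le_map hYoX hMX hT, le_comap_of_mul_eq_of_le_map hY1X hMX hqS,
    hT, hS]

theorem IsIrreducibleFamily.map_pow_eq_eigenspace_inf {Xo Yo Y1 T S : Module.End K V} {q a b : K}
    (hf : IsIrreducibleFamily ![Xo, Yo, Y1, T, S]) (hYoX : Yo * Xo = T)
    (hY1X : Y1 * Xo = q • S - 1) (hXT : Xo * T = (T - 1) * Xo) (hXS : Xo * S = q⁻¹ • (S * Xo))
    (hq : q ≠ 0) (hb : b ≠ 0) {r : ℕ} (hr : 0 < r)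
    (hmin : ∀ i : ℕ, 0 < i → i < r → ¬((i : K) = 0 ∧ q ^ i = 1)) {L : Submodule K V}
    (hL : L ≤ T.eigenspace a ⊓ S.eigenspace b) (hLr : L.map (Xo ^ r) = L) (hL0 : L ≠ ⊥)
    (n : Fin r) :
    L.map (Xo ^ (n : ℕ)) = T.eigenspace (a + (n : ℕ)) ⊓ S.eigenspace (q ^ (n : ℕ) * b) :=
  congrFun (((iSupIndep_orbit_eigenspace_inf T S hq hb hmin).le_iff_eq_of_iSup_eq_top
    (hf.iSup_map_pow_eq_top hYoX hY1X hXT hXS hq hr hL hLr hL0)).mp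
    fun n => map_pow_le_eigenspace_inf hq hXT hXS hL n) n

theorem IsIrreducibleFamily.exists_pow_eq_algebraMap [IsAlgClosed K]
    {Xo Yo Y1 T S : Module.End K V} {q a b : K}
    (hf : IsIrreducibleFamily ![Xo, Yo, Y1, T, S]) (hYoX : Yo * Xo = T) (hXYo : Xo * Yo = T - 1)
    (hY1X : Y1 * Xo = q • S - 1) (hXY1 : Xo * Y1 = S - 1) (hXT : Xo * T = (T - 1) * Xo)
    (hXS : Xo * S = q⁻¹ • (S * Xo)) (hXinj : Function.Injective Xo) (hq : q ≠ 0) (hb : b ≠ 0)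
    {r : ℕ} (hr : 0 < r) (hrK : (r : K) = 0) (hqr : q ^ r = 1)
    (hmin : ∀ i : ℕ, 0 < i → i < r → ¬((i : K) = 0 ∧ q ^ i = 1)) {v : V}
    (hv : v ∈ T.eigenspace a ⊓ S.eigenspace b) (hv0 : v ≠ 0) :
    ∃ μ : K, μ ≠ 0 ∧ Xo ^ r = algebraMap K (Module.End K V) μ := by
  have hcomm := commute_generators_pow hYoX hXYo hY1X hXY1 hXT hXS hrK hqr
  have hTZ : Commute T (Xo ^ r) := hcomm 3
  have hSZ : Commute S (Xo ^ r) := hcomm 4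
  have hZinj := Module.End.iterate_injective hXinj r
  have hZsurj := (hf.bijective_of_commute hcomm fun h => hv0 (hZinj (by simp [h]))).2
  have hLaurent : laurentSpan (Xo ^ r) v = T.eigenspace a ⊓ S.eigenspace b := by
    simpa [Module.End.one_eq_id] using hf.map_pow_eq_eigenspace_inf hYoX hY1X hXT hXS hq hb hr
      hmin (laurentSpan_le hv (eigenspace_inf_le_comap hTZ hSZ a b)
        (comap_eigenspace_inf_le hTZ hSZ hZinj a b))
      (map_laurentSpan_eq hZsurj) (laurentSpan_ne_bot hv0) ⟨0, hr⟩
  obtain ⟨μ, hμ⟩ := hf.exists_eq_algebraMap_of_laurentSpan_eq hcomm (i := 3) (j := 4) hv0 hLaurent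
  refine ⟨μ, ?_, hμ⟩
  rintro rfl
  exact hv0 (hZinj (by simp [hμ]))

end Spanning

theorem stmt16_general (K : Type*) [Field K] [IsAlgClosed K] (q : K) (hq0 : q ≠ 0)
    (V : Type*) [AddCommGroup V] [Module K V]
    (Xo Yo Y1 T S : Module.End K V)
    (rel1 : Yo * Xo = T) (rel2 : Xo * Yo = T - 1)
    (rel3 : Y1 * Xo = q • S - 1) (rel4 : Xo * Y1 = S - 1)
    (rel6 : Xo * T = (T - 1) * Xo) (rel7 : Xo * S = q⁻¹ • (S * Xo))
    (W : K → K → Submodule K V)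
    (hW : ∀ a b : K, ∀ v : V, v ∈ W a b ↔ T v = a • v ∧ S v = b • v)
    (hirr : ∀ p : Submodule K V,
      (∀ v ∈ p, Xo v ∈ p) → (∀ v ∈ p, Yo v ∈ p) → (∀ v ∈ p, Y1 v ∈ p) →
      (∀ v ∈ p, T v ∈ p) → (∀ v ∈ p, S v ∈ p) → p = ⊥ ∨ p = ⊤)
    (hXinj : Function.Injective Xo)
    (r : ℕ) (hr : 0 < r) (a₀ b₀ : K) (hb₀ : b₀ ≠ 0)
    -- the orbit of `(a₀, b₀)` under `α : (a,b) ↦ (a+1, q·b)` is finite of cardinality `r`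
    (horb : (r : K) = 0 ∧ q ^ r = 1)
    (hmin : ∀ i : ℕ, 0 < i → i < r → ¬((i : K) = 0 ∧ q ^ i = 1))
    -- the support of `V` is contained in the orbit `ω`
    (hsupp : ∀ a b : K, W a b ≠ ⊥ → ∃ i : ℕ, i < r ∧ a = a₀ + i ∧ b = q ^ i * b₀)
    (v₀ : V) (hv₀ : v₀ ∈ W a₀ b₀) (hv₀ne : v₀ ≠ 0) :
    Submodule.span K (Set.range fun i : Fin r => (Xo ^ (i : ℕ)) v₀) = ⊤ ∧
    Module.rank K V = r ∧
    (∀ a b : K, W a b ≠ ⊥ → Module.rank K (W a b) = 1) := by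
  have hWE : ∀ a b, W a b = T.eigenspace a ⊓ S.eigenspace b := fun a b => by ext v; simp [hW]
  have hv₀E : v₀ ∈ T.eigenspace a₀ ⊓ S.eigenspace b₀ := hWE a₀ b₀ ▸ hv₀
  have hf : IsIrreducibleFamily ![Xo, Yo, Y1, T, S] := fun p hp =>
    hirr p (hp 0) (hp 1) (hp 2) (hp 3) (hp 4)
  obtain ⟨μ, hμ0, hμ⟩ := hf.exists_pow_eq_algebraMap rel1 rel2 rel3 rel4 rel6 rel7 hXinj hq0 hb₀
    hr horb.1 horb.2 hmin hv₀E hv₀ne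
  have hline_le : K ∙ v₀ ≤ T.eigenspace a₀ ⊓ S.eigenspace b₀ :=
    (Submodule.span_singleton_le_iff_mem _ _).mpr hv₀E
  have hline_map : (K ∙ v₀).map (Xo ^ r) = K ∙ v₀ := by
    rw [Submodule.map_span, Set.image_singleton, hμ, Module.algebraMap_end_apply,
      Submodule.span_singleton_smul_eq (IsUnit.mk0 _ hμ0)]
  have hline_ne : K ∙ v₀ ≠ ⊥ := by simpa using hv₀ne
  have hspan : Submodule.span K (Set.range fun i : Fin r => (Xo ^ (i : ℕ)) v₀) = ⊤ := by
    simpa [Submodule.span_range_eq_iSup, Submodule.map_span] using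
      hf.iSup_map_pow_eq_top rel1 rel3 rel6 rel7 hq0 hr hline_le hline_map hline_ne
  have hline (n : Fin r) :
      K ∙ (Xo ^ (n : ℕ)) v₀ = T.eigenspace (a₀ + (n : ℕ)) ⊓ S.eigenspace (q ^ (n : ℕ) * b₀) := by
    simpa [Submodule.map_span] using hf.map_pow_eq_eigenspace_inf rel1 rel3 rel6 rel7 hq0 hb₀ hr
      hmin hline_le hline_map hline_ne n
  have hXn (n : ℕ) : (Xo ^ n) v₀ ≠ 0 := by
    simpa using (Module.End.iterate_injective hXinj n).ne hv₀ne
  refine ⟨hspan, ?_, fun a b hab => ?_⟩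
  · have hli : LinearIndependent K fun i : Fin r => (Xo ^ (i : ℕ)) v₀ :=
      (iSupIndep_orbit_eigenspace_inf T S hq0 hb₀ hmin).linearIndependent _
        (fun n => (hline n).le (Submodule.mem_span_singleton_self _)) fun n => hXn n
    rw [rank_eq_card_basis (Module.Basis.mk hli hspan.ge), Fintype.card_fin]
  · obtain ⟨i, hi, rfl, rfl⟩ := hsupp a b hab
    rw [hWE, ← hline ⟨i, hi⟩, ← Module.finrank_eq_rank, finrank_span_singleton (hXn i),
      Nat.cast_one]

/-- Let `V` be an irreducible weight `D`-module on which `X` acts injectively, whose support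
lies in a single finite orbit `ω = {(a₀+i, qⁱb₀) : 0 ≤ i < r}` of `α` on `Max R`.  Then for a
fixed nonzero weight vector `v₀` the vectors `Xⁱ v₀`, `0 ≤ i < r = |ω|`, span `V`; in
particular `dim V = |ω|` and every weight space is one-dimensional. -/
theorem stmt16 (K : Type*) [Field K] [IsAlgClosed K] (q : K) (hq0 : q ≠ 0)
    (V : Type*) [AddCommGroup V] [Module K V]
    (Xo Yo Y1 T S : Module.End K V) (hSu : IsUnit S)
    (rel1 : Yo * Xo = T) (rel2 : Xo * Yo = T - 1)
    (rel3 : Y1 * Xo = q • S - 1) (rel4 : Xo * Y1 = S - 1)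
    (rel5 : Y1 * (T - 1) = Yo * (S - 1))
    (rel6 : Xo * T = (T - 1) * Xo) (rel7 : Xo * S = q⁻¹ • (S * Xo))
    (rel8 : Yo * T = (T + 1) * Yo) (rel9 : Yo * S = q • (S * Yo))
    (rel10 : Y1 * T = (T + 1) * Y1) (rel11 : Y1 * S = q • (S * Y1))
    (W : K → K → Submodule K V)
    (hW : ∀ a b : K, ∀ v : V, v ∈ W a b ↔ T v = a • v ∧ S v = b • v)
    (hweight : (⨆ a : K, ⨆ b : K, W a b) = ⊤)
    (hirr : ∀ p : Submodule K V,
      (∀ v ∈ p, Xo v ∈ p) → (∀ v ∈ p, Yo v ∈ p) → (∀ v ∈ p, Y1 v ∈ p) →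
      (∀ v ∈ p, T v ∈ p) → (∀ v ∈ p, S v ∈ p) → p = ⊥ ∨ p = ⊤)
    (hnz : ∃ v : V, v ≠ 0)
    (hXinj : Function.Injective Xo)
    (r : ℕ) (hr : 0 < r) (a₀ b₀ : K) (hb₀ : b₀ ≠ 0)
    -- the orbit of `(a₀, b₀)` under `α : (a,b) ↦ (a+1, q·b)` is finite of cardinality `r`
    (horb : (r : K) = 0 ∧ q ^ r = 1)
    (hmin : ∀ i : ℕ, 0 < i → i < r → ¬((i : K) = 0 ∧ q ^ i = 1))
    -- the support of `V` is contained in the orbit `ω`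
    (hsupp : ∀ a b : K, W a b ≠ ⊥ → ∃ i : ℕ, i < r ∧ a = a₀ + i ∧ b = q ^ i * b₀)
    (v₀ : V) (hv₀ : v₀ ∈ W a₀ b₀) (hv₀ne : v₀ ≠ 0) :
    Submodule.span K (Set.range fun i : Fin r => (Xo ^ (i : ℕ)) v₀) = ⊤ ∧
    Module.rank K V = r ∧
    (∀ a b : K, W a b ≠ ⊥ → Module.rank K (W a b) = 1) :=
  stmt16_general K q hq0 V Xo Yo Y1 T S rel1 rel2 rel3 rel4 rel6 rel7 W hW hirr hXinj r hr a₀ b₀ hb₀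
    horb hmin hsupp v₀ hv₀ hv₀ne
end
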